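/- arXiv:2304.04352 — 3 statements merged into one kernel-verified Lean document; each statement's English description precedes it below -/
import Mathlib

section
/- Let X be the degree 3 vector field X = (5xyz − y³ + 2z³) ∂/∂x + (−(3/2)x²y − (3/2)xz² + (9/2)y²z) ∂/∂y − 3xy² ∂/∂z. Then [1:0:0] is the unique singular point of X, the multiplicity of X at [1:0:0] equals 1, and the Milnor number of X at [1:0:0] equals 13 (equivalently, for the local representation f = −(3/2)y − (3/2)z² − (1/2)y²z + y⁴ − 2yz³ and g = −3y² − 5yz² + y³z − 2z⁴ one has I₀(f,g) = 13). -/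
open MvPolynomial Matrix

noncomputable section

abbrev SL3 := Matrix.SpecialLinearGroup (Fin 3) ℂ

abbrev VF3 := Fin 3 → MvPolynomial (Fin 3) ℂ

/-- A polynomial vector field as a map `ℂ³ → ℂ³`. -/
def vfFun (Xf : VF3) : (Fin 3 → ℂ) → (Fin 3 → ℂ) := fun v i => eval v (Xf i)

/-- `p` represents a singular point of `Xf`. -/
def IsSing (Xf : VF3) (p : Fin 3 → ℂ) : Prop := ∃ lam : ℂ, vfFun Xf p = lam • p

/-- `[1:0:0]` is the unique singular point of `Xf`. -/
def UniqueSingE0 (Xf : VF3) : Prop :=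
  IsSing Xf ![1, 0, 0] ∧
    ∀ p : Fin 3 → ℂ, p ≠ 0 → IsSing Xf p → ∃ c : ℂ, p = c • ![1, 0, 0]

/-- Dehomogenization at `x = 1`; the variables of the result are `y = X 0`, `z = X 1`. -/
def deh (p : MvPolynomial (Fin 3) ℂ) : MvPolynomial (Fin 2) ℂ :=
  aeval (![1, X 0, X 1] : Fin 3 → MvPolynomial (Fin 2) ℂ) p

/-- First polynomial of the local representation at `[1:0:0]`: `f = Q(1,y,z) - y·P(1,y,z)`. -/
def locF (Xf : VF3) : MvPolynomial (Fin 2) ℂ := deh (Xf 1) - X 0 * deh (Xf 0)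

/-- Second polynomial of the local representation at `[1:0:0]`: `g = R(1,y,z) - z·P(1,y,z)`. -/
def locG (Xf : VF3) : MvPolynomial (Fin 2) ℂ := deh (Xf 2) - X 1 * deh (Xf 0)

/-- Order of a polynomial: least total degree of a nonzero homogeneous component. -/
def ordP (h : MvPolynomial (Fin 2) ℂ) : ℕ :=
  sInf {n | homogeneousComponent n h ≠ 0}

/-- Multiplicity of the singular point `[1:0:0]`. -/
def multE0 (Xf : VF3) : ℕ := min (ordP (locF Xf)) (ordP (locG Xf))

/-- Polynomials in `y, z` that do not vanish at the origin. -/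
def S0 : Submonoid (MvPolynomial (Fin 2) ℂ) :=
  (nonZeroDivisors ℂ).comap
    (eval (fun _ => (0 : ℂ)) : MvPolynomial (Fin 2) ℂ →+* ℂ).toMonoidHom

/-- The local ring `O₀` of `ℂ²` at the origin. -/
abbrev O0 := Localization S0

/-- Intersection index at the origin. -/
def interIdx (f g : MvPolynomial (Fin 2) ℂ) : ℕ :=
  Module.finrank ℂ
    (O0 ⧸ Ideal.span {algebraMap (MvPolynomial (Fin 2) ℂ) O0 f,
      algebraMap (MvPolynomial (Fin 2) ℂ) O0 g})

/-- Action of `SL(3,ℂ)` by change of coordinates: `(g·X)(v) = g·X(g⁻¹·v)`. -/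
def act3 (g : SL3) (Xf : VF3) : VF3 := fun i =>
  ∑ j, ((g : Matrix (Fin 3) (Fin 3) ℂ) i j) •
    (aeval (fun k => ∑ l, (((g⁻¹ : SL3) : Matrix (Fin 3) (Fin 3) ℂ) k l) •
      (X l : MvPolynomial (Fin 3) ℂ)) (Xf j))

/-- Divergence of a polynomial vector field. -/
def divg (Xf : VF3) : MvPolynomial (Fin 3) ℂ := ∑ i, pderiv i (Xf i)

/-- Divergence-free representative of a degree 3 vector field: `X₀ = X - (1/5)(div X)·E`. -/
def nf3 (Xf : VF3) : VF3 := fun i => Xf i - (1 / 5 : ℂ) • (divg Xf * X i)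

/-- Orbit of the divergence-free representative, as polynomial maps `ℂ³ → ℂ³`. -/
def orbitF3 (Xf : VF3) : Set ((Fin 3 → ℂ) → Fin 3 → ℂ) :=
  {F | ∃ g : SL3, F = vfFun (act3 g (nf3 Xf))}

/-- `Xf` is unstable: `0` lies in the closure of the orbit of `X₀`. -/
def Unstable3 (Xf : VF3) : Prop :=
  (0 : (Fin 3 → ℂ) → Fin 3 → ℂ) ∈ closure (orbitF3 Xf)

def Semistable3 (Xf : VF3) : Prop := ¬ Unstable3 Xf

/-- `Xf` is stable: semistable, closed orbit, finite stabilizer. -/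
def Stable3 (Xf : VF3) : Prop :=
  Semistable3 Xf ∧ IsClosed (orbitF3 Xf) ∧
    {g : SL3 | act3 g (nf3 Xf) = nf3 Xf}.Finite

/-- A degree 3 foliation: components homogeneous of degree 3, not all zero. -/
def IsDeg3Fol (Xf : VF3) : Prop := (∀ i, (Xf i).IsHomogeneous 3) ∧ Xf ≠ 0

/-!
In the chart `x = 1` the local representation `f, g` has `f` with nonzero linear part `-(3/2) y`,
so `f = 0` is a smooth branch `y = φ(z)`. For the truncation `ψ(z) = -z² + z⁵ - 3z¹¹` of `φ`,
both `f(ψ(t), t)` and `g(ψ(t), t)` vanish to order `13`, and in fact `(f, g) = (y - ψ(z), z¹³)`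
already as ideals of `ℂ[y, z]`. Sending `y ↦ ψ(t)`, `z ↦ t` identifies the quotient of the local
ring `O₀` by this ideal with `ℂ[t]/(t¹³)`, of dimension `13`. The same ideal identity shows that
`f` and `g` have no common zero besides the origin, so `[1:0:0]` is the only singular point
off the line `x = 0`; on that line the equations reduce to `y³ = 2z³` and `yz = 0`.
-/

def curvilinearIdeal (ψ : Polynomial ℂ) (n : ℕ) : Ideal (MvPolynomial (Fin 2) ℂ) :=
  Ideal.span {X 0 - Polynomial.aeval (X 1) ψ, X 1 ^ n}

namespace Curvilinear

variable (ψ : Polynomial ℂ) (n : ℕ)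

abbrev TruncatedPoly := AdjoinRoot (Polynomial.X ^ n : Polynomial ℂ)

def restrict : MvPolynomial (Fin 2) ℂ →ₐ[ℂ] Polynomial ℂ := aeval ![ψ, Polynomial.X]

def toTrunc : MvPolynomial (Fin 2) ℂ →ₐ[ℂ] TruncatedPoly n :=
  (AdjoinRoot.mkₐ _).comp (restrict ψ)

@[simp] lemma restrict_X_zero : restrict ψ (X 0) = ψ := by simp [restrict]

@[simp] lemma restrict_X_one : restrict ψ (X 1) = Polynomial.X := by simp [restrict]

@[simp] lemma restrict_aeval_X_one (p : Polynomial ℂ) :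
    restrict ψ (Polynomial.aeval (X 1) p) = p := by
  rw [← Polynomial.aeval_algHom_apply, restrict_X_one, Polynomial.aeval_X_left_apply]

lemma ker_toTrunc : RingHom.ker (toTrunc ψ n) = curvilinearIdeal ψ n := by
  apply le_antisymm
  · intro a ha
    obtain ⟨c, hc⟩ : Polynomial.X ^ n ∣ restrict ψ a := AdjoinRoot.mk_eq_zero.mp ha
    set ρ : Polynomial ℂ →ₐ[ℂ] MvPolynomial (Fin 2) ℂ := Polynomial.aeval (X 1)
    set π := Ideal.Quotient.mkₐ ℂ (Ideal.span {X 0 - ρ ψ})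
    -- modulo `y - ψ(z)`, substituting `ψ(z)` for `y` changes nothing
    have hπ : π.comp (ρ.comp (restrict ψ)) = π := by
      refine MvPolynomial.algHom_ext fun i => ?_
      match i with
      | 0 =>
        simp only [AlgHom.comp_apply, restrict_X_zero, π, Ideal.Quotient.mkₐ_eq_mk]
        exact (Ideal.Quotient.eq.mpr (Ideal.mem_span_singleton_self _)).symm
      | 1 => simp [ρ]
    obtain ⟨k, hk⟩ := Ideal.mem_span_singleton'.mp
      (Ideal.Quotient.eq.mp (DFunLike.congr_fun hπ a).symm)
    refine Ideal.mem_span_pair.mpr ⟨k, ρ c, ?_⟩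
    rw [hk]
    have : ρ (restrict ψ a) = X 1 ^ n * ρ c := by simp [hc, ρ]
    change a - ρ (restrict ψ a) + _ = a
    rw [this]; ring
  · refine Ideal.span_le.mpr ?_
    rintro a (rfl | rfl)
    · simp [toTrunc]
    · exact RingHom.mem_ker.mpr (by simp [toTrunc])

lemma mem_curvilinearIdeal_iff {a : MvPolynomial (Fin 2) ℂ} :
    a ∈ curvilinearIdeal ψ n ↔ Polynomial.X ^ n ∣ restrict ψ a := by
  rw [← ker_toTrunc, RingHom.mem_ker]
  exact AdjoinRoot.mk_eq_zero

lemma toTrunc_surjective : Function.Surjective (toTrunc ψ n) := fun b => by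
  obtain ⟨p, rfl⟩ := AdjoinRoot.mk_surjective b
  exact ⟨Polynomial.aeval (X 1) p, by simp [toTrunc]⟩

lemma isUnit_mk_of_coeff_zero_ne_zero {p : Polynomial ℂ} (hp : p.coeff 0 ≠ 0) :
    IsUnit (AdjoinRoot.mk (Polynomial.X ^ n) p) := by
  obtain ⟨q, hq⟩ := Polynomial.X_dvd_sub_C (p := p)
  have hroot : IsNilpotent (AdjoinRoot.root (Polynomial.X ^ n : Polynomial ℂ)) :=
    ⟨n, by simpa using AdjoinRoot.eval₂_root (Polynomial.X ^ n : Polynomial ℂ)⟩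
  have hp' : AdjoinRoot.mk _ p =
      algebraMap ℂ (TruncatedPoly n) (p.coeff 0) + AdjoinRoot.root _ * AdjoinRoot.mk _ q := by
    rw [eq_add_of_sub_eq' hq]; simp
  rw [hp']
  exact ((Commute.all _ _).isNilpotent_mul_right hroot).isUnit_add_left_of_commute
    ((Ne.isUnit hp).map (algebraMap ℂ (TruncatedPoly n))) (Commute.all _ _)

lemma isUnit_toTrunc (hψ : ψ.eval 0 = 0) {s : MvPolynomial (Fin 2) ℂ} (hs : s ∈ S0) :
    IsUnit (toTrunc ψ n s) := by
  have hs0 : eval 0 s ≠ 0 := nonZeroDivisors.ne_zero hs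
  refine isUnit_mk_of_coeff_zero_ne_zero n ?_
  have : (Polynomial.aeval (0 : ℂ)).comp (restrict ψ) = aeval 0 :=
    MvPolynomial.algHom_ext fun i => by
      match i with
      | 0 => simpa using hψ
      | 1 => simp
  rw [Polynomial.coeff_zero_eq_eval_zero, ← Polynomial.coe_aeval_eq_eval]
  change (Polynomial.aeval (0 : ℂ)).comp (restrict ψ) s ≠ 0
  rwa [this, aeval_eq_eval]

variable {ψ}

def localToTrunc (hψ : ψ.eval 0 = 0) : O0 →ₐ[ℂ] TruncatedPoly n :=
  IsLocalization.liftAlgHom (M := S0) (f := toTrunc ψ n) fun s => isUnit_toTrunc ψ n hψ s.2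

lemma localToTrunc_algebraMap (hψ : ψ.eval 0 = 0) (a : MvPolynomial (Fin 2) ℂ) :
    localToTrunc n hψ (algebraMap _ O0 a) = toTrunc ψ n a :=
  IsLocalization.lift_eq _ _

lemma ker_localToTrunc (hψ : ψ.eval 0 = 0) :
    RingHom.ker (localToTrunc n hψ) = (curvilinearIdeal ψ n).map (algebraMap _ O0) := by
  rw [← ker_toTrunc, ← IsLocalization.map_under S0 O0 (RingHom.ker (localToTrunc n hψ))]
  congr 1
  ext a
  simp [RingHom.mem_ker, localToTrunc_algebraMap]

lemma localToTrunc_surjective (hψ : ψ.eval 0 = 0) :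
    Function.Surjective (localToTrunc n hψ) := fun b => by
  obtain ⟨a, rfl⟩ := toTrunc_surjective ψ n b
  exact ⟨_, localToTrunc_algebraMap n hψ a⟩

lemma finrank_quotient_map_curvilinearIdeal (hψ : ψ.eval 0 = 0) :
    Module.finrank ℂ (O0 ⧸ (curvilinearIdeal ψ n).map (algebraMap _ O0)) = n := by
  rw [← ker_localToTrunc n hψ,
    (Ideal.quotientKerAlgEquivOfSurjective (localToTrunc_surjective n hψ)).toLinearEquiv.finrank_eq,
    (AdjoinRoot.powerBasis (pow_ne_zero n Polynomial.X_ne_zero)).finrank,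
    AdjoinRoot.powerBasis_dim, Polynomial.natDegree_X_pow]

end Curvilinear

lemma interIdx_eq_of_span_eq_curvilinearIdeal {f g : MvPolynomial (Fin 2) ℂ} {ψ : Polynomial ℂ}
    {n : ℕ} (h : Ideal.span {f, g} = curvilinearIdeal ψ n) (hψ : ψ.eval 0 = 0) :
    interIdx f g = n := by
  rw [interIdx, ← Curvilinear.finrank_quotient_map_curvilinearIdeal n hψ, ← h, Ideal.map_span,
    Set.image_pair]

lemma eq_zero_of_eval_eq_zero_of_span_eq_curvilinearIdeal {f g : MvPolynomial (Fin 2) ℂ}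
    {ψ : Polynomial ℂ} {n : ℕ} (h : Ideal.span {f, g} = curvilinearIdeal ψ n)
    (hψ : ψ.eval 0 = 0) (hn : n ≠ 0) {v : Fin 2 → ℂ} (hf : eval v f = 0) (hg : eval v g = 0) :
    v = 0 := by
  have hker : curvilinearIdeal ψ n ≤ RingHom.ker (eval v) := by
    rw [← h, Ideal.span_le]
    rintro a (rfl | rfl) <;> assumption
  have h1 : v 1 = 0 := by
    simpa [hn] using hker (Ideal.subset_span (Set.mem_insert_of_mem _ rfl))
  have hψv : eval v (Polynomial.aeval (X 1) ψ) = ψ.eval (v 1) := by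
    simpa using (Polynomial.aeval_algHom_apply (aeval v) (X 1) ψ).symm
  have h0 : v 0 = 0 := by
    simpa [hψv, h1, hψ] using hker (Ideal.subset_span (Set.mem_insert _ _))
  ext i; fin_cases i <;> assumption

section Order

variable {h : MvPolynomial (Fin 2) ℂ} {d : Fin 2 →₀ ℕ}

lemma homogeneousComponent_degree_ne_zero (hd : coeff d h ≠ 0) :
    homogeneousComponent d.degree h ≠ 0 := fun h0 => hd <| by
  simpa [coeff_homogeneousComponent] using congr_arg (coeff d) h0

lemma ordP_le_degree (hd : coeff d h ≠ 0) : ordP h ≤ d.degree :=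
  Nat.sInf_le (homogeneousComponent_degree_ne_zero hd)

lemma one_le_ordP (hd : coeff d h ≠ 0) (h0 : constantCoeff h = 0) : 1 ≤ ordP h := by
  have hmem : homogeneousComponent (ordP h) h ≠ 0 :=
    Nat.sInf_mem (s := {n | homogeneousComponent n h ≠ 0})
      ⟨_, homogeneousComponent_degree_ne_zero hd⟩
  refine Nat.one_le_iff_ne_zero.mpr fun hord => hmem ?_
  rw [hord, homogeneousComponent_zero, ← constantCoeff_eq, h0, C_0]

end Order

def exampleField : VF3 :=
  ![C (5 : ℂ) * X 0 * X 1 * X 2 - X 1 ^ 3 + C 2 * X 2 ^ 3,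
    -(C (3/2 : ℂ)) * X 0 ^ 2 * X 1 - C (3/2 : ℂ) * X 0 * X 2 ^ 2 + C (9/2 : ℂ) * X 1 ^ 2 * X 2,
    -(C (3 : ℂ)) * X 0 * X 1 ^ 2]

lemma locF_exampleField : locF exampleField =
    -(C (3/2 : ℂ)) * X 0 - C (3/2 : ℂ) * X 1 ^ 2 - C (1/2 : ℂ) * X 0 ^ 2 * X 1 + X 0 ^ 4
      - C 2 * X 0 * X 1 ^ 3 :=
  MvPolynomial.funext fun v => by simp [locF, deh, exampleField]; ring

lemma locG_exampleField : locG exampleField =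
    -(C (3 : ℂ)) * X 0 ^ 2 - C 5 * X 0 * X 1 ^ 2 + X 0 ^ 3 * X 1 - C 2 * X 1 ^ 4 :=
  MvPolynomial.funext fun v => by simp [locG, deh, exampleField]; ring

def exampleBranch : Polynomial ℂ := -Polynomial.X ^ 2 + Polynomial.X ^ 5 - 3 * Polynomial.X ^ 11

lemma span_locF_locG_exampleField :
    Ideal.span {locF exampleField, locG exampleField} = curvilinearIdeal exampleBranch 13 := by
  apply le_antisymm
  · rw [Ideal.span_le]
    rintro a (rfl | rfl) <;> rw [SetLike.mem_coe, Curvilinear.mem_curvilinearIdeal_iff]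
    · refine ⟨9 * Polynomial.X + 11 * Polynomial.X ^ 4 - 35 * Polynomial.X ^ 7
        + Polynomial.C (63/2) * Polynomial.X ^ 10 + 42 * Polynomial.X ^ 13
        - 108 * Polynomial.X ^ 16 + 54 * Polynomial.X ^ 19 + 108 * Polynomial.X ^ 22
        - 108 * Polynomial.X ^ 25 + 81 * Polynomial.X ^ 31, Polynomial.funext fun t => ?_⟩
      simp [locF_exampleField, Curvilinear.restrict, exampleBranch]; ring
    · refine ⟨-6 + 10 * Polynomial.X ^ 3 + 18 * Polynomial.X ^ 6 - 36 * Polynomial.X ^ 9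
        - 27 * Polynomial.X ^ 12 + 27 * Polynomial.X ^ 15 - 27 * Polynomial.X ^ 21,
        Polynomial.funext fun t => ?_⟩
      simp [locG_exampleField, Curvilinear.restrict, exampleBranch]; ring
  · rw [curvilinearIdeal, Ideal.span_le]
    rintro a (rfl | rfl) <;> rw [SetLike.mem_coe, Ideal.mem_span_pair]
    -- cofactors found by computer algebra
    · refine ⟨C (-1/9 : ℂ) * (6 - 18 * X 1 ^ 3 - 36 * X 1 ^ 6 - 20 * X 0 * X 1 - 30 * X 0 * X 1 ^ 4
          - 3 * X 0 * X 1 ^ 7 + 6 * X 0 ^ 2 * X 1 ^ 2 + 9 * X 0 ^ 2 * X 1 ^ 5),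
        C (-1/18 : ℂ) * (18 * X 1 + 54 * X 1 ^ 4 + 27 * X 1 ^ 7 + 9 * X 0 * X 1 ^ 5 + 4 * X 0 ^ 2
          + 6 * X 0 ^ 2 * X 1 ^ 3 + 6 * X 0 ^ 2 * X 1 ^ 6 - 12 * X 0 ^ 3 * X 1
          - 18 * X 0 ^ 3 * X 1 ^ 4),
        MvPolynomial.funext fun v => ?_⟩
      simp [locF_exampleField, locG_exampleField, exampleBranch, map_ofNat]; ring
    · refine ⟨C (-1/9 : ℂ) * (-2 * X 1 ^ 2 - 6 * X 1 ^ 5 - 12 * X 1 ^ 8 - 3 * X 0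
          - 7 * X 0 * X 1 ^ 3 - 10 * X 0 * X 1 ^ 6 - X 0 * X 1 ^ 9 + X 0 ^ 2 * X 1
          + 2 * X 0 ^ 2 * X 1 ^ 4 + 3 * X 0 ^ 2 * X 1 ^ 7),
        C (-1/18 : ℂ) * (3 + 9 * X 1 ^ 3 + 18 * X 1 ^ 6 + 9 * X 1 ^ 9 + X 0 * X 1
          + 3 * X 0 * X 1 ^ 7 + 2 * X 0 ^ 2 * X 1 ^ 2 + 2 * X 0 ^ 2 * X 1 ^ 5
          + 2 * X 0 ^ 2 * X 1 ^ 8 - 2 * X 0 ^ 3 - 4 * X 0 ^ 3 * X 1 ^ 3 - 6 * X 0 ^ 3 * X 1 ^ 6),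
        MvPolynomial.funext fun v => ?_⟩
      simp [locF_exampleField, locG_exampleField]; ring

lemma isSing_exampleField_iff {x y z : ℂ} :
    IsSing exampleField ![x, y, z] ↔ ∃ lam : ℂ,
      5 * x * y * z - y ^ 3 + 2 * z ^ 3 = lam * x ∧
      -(3/2) * x ^ 2 * y - (3/2) * x * z ^ 2 + (9/2) * y ^ 2 * z = lam * y ∧
      -3 * x * y ^ 2 = lam * z := by
  simp [IsSing, vfFun, exampleField, funext_iff, Fin.forall_fin_succ]

lemma uniqueSingE0_exampleField : UniqueSingE0 exampleField := by
  refine ⟨isSing_exampleField_iff.mpr ⟨0, by norm_num⟩, ?_⟩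
  intro p hp hsing
  obtain ⟨x, y, z, rfl⟩ : ∃ x y z, p = ![x, y, z] :=
    ⟨p 0, p 1, p 2, by ext i; fin_cases i <;> rfl⟩
  obtain ⟨lam, hP, hQ, hR⟩ := isSing_exampleField_iff.mp hsing
  by_cases hx : x = 0
  · subst hx
    have hyz : y * z = 0 := by
      have : (y * z) ^ 2 = 0 := by linear_combination (2/9) * (z * hQ - y * hR)
      exact pow_eq_zero_iff two_ne_zero |>.mp this
    have hy : y = 0 := by
      rcases mul_eq_zero.mp hyz with hy | hz
      · exact hy
      · subst hz; exact pow_eq_zero_iff three_ne_zero |>.mp (by linear_combination -hP)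
    have hz : z = 0 := by
      subst hy; exact pow_eq_zero_iff three_ne_zero |>.mp (by linear_combination (1/2) * hP)
    exact absurd (by simp [hy, hz]) hp
  · obtain ⟨a, rfl⟩ : ∃ a, y = a * x := ⟨y / x, by field_simp⟩
    obtain ⟨b, rfl⟩ : ∃ b, z = b * x := ⟨z / x, by field_simp⟩
    -- `x⁴ f(a, b)` and `x⁴ g(a, b)` are the homogeneous equations `xQ - yP` and `xR - zP`
    have hf : x ^ 4 * eval ![a, b] (locF exampleField) = 0 := by
      simp only [locF_exampleField, map_sub, map_add, map_mul, map_neg, map_pow, eval_X, eval_C,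
        Matrix.cons_val_zero, Matrix.cons_val_one]
      linear_combination x * hQ - a * x * hP
    have hg : x ^ 4 * eval ![a, b] (locG exampleField) = 0 := by
      simp only [locG_exampleField, map_sub, map_add, map_mul, map_neg, map_pow, eval_X, eval_C,
        Matrix.cons_val_zero, Matrix.cons_val_one]
      linear_combination x * hR - b * x * hP
    have hab := eq_zero_of_eval_eq_zero_of_span_eq_curvilinearIdeal span_locF_locG_exampleField
      (by simp [exampleBranch]) (by norm_num) ((mul_eq_zero.mp hf).resolve_left (pow_ne_zero 4 hx))
      ((mul_eq_zero.mp hg).resolve_left (pow_ne_zero 4 hx))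
    have ha : a = 0 := congrFun hab 0
    have hb : b = 0 := congrFun hab 1
    exact ⟨x, by simp [ha, hb]⟩


lemma multE0_exampleField : multE0 exampleField = 1 := by
  have hf : coeff (Finsupp.single 0 1) (locF exampleField) ≠ 0 := by
    simp [locF_exampleField, coeff_C_mul, mul_assoc, X_pow_eq_monomial, coeff_mul_monomial',
      coeff_mul_X', coeff_monomial, Finsupp.single_eq_single_iff]
  have hg : coeff (Finsupp.single 0 2) (locG exampleField) ≠ 0 := by
    simp [locG_exampleField, coeff_C_mul, mul_assoc, X_pow_eq_monomial, coeff_mul_monomial',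
      coeff_mul_X']
  have hordF : ordP (locF exampleField) = 1 :=
    le_antisymm (by simpa using ordP_le_degree hf) (one_le_ordP hf (by simp [locF_exampleField]))
  rw [multE0, hordF]
  exact min_eq_left (one_le_ordP hg (by simp [locG_exampleField]))

/-- The foliation `X = (5xyz - y³ + 2z³)∂x + (-(3/2)x²y - (3/2)xz² + (9/2)y²z)∂y - 3xy²∂z`
has `[1:0:0]` as its unique singular point, of multiplicity 1 and Milnor number 13. -/
theorem stmt1 (Xf : VF3)
    (hXf : Xf = ![C (5 : ℂ) * X 0 * X 1 * X 2 - X 1 ^ 3 + C 2 * X 2 ^ 3,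
      -(C (3/2 : ℂ)) * X 0 ^ 2 * X 1 - C (3/2 : ℂ) * X 0 * X 2 ^ 2
        + C (9/2 : ℂ) * X 1 ^ 2 * X 2,
      -(C (3 : ℂ)) * X 0 * X 1 ^ 2]) :
    UniqueSingE0 Xf ∧ multE0 Xf = 1 ∧ interIdx (locF Xf) (locG Xf) = 13 := by
  obtain rfl : Xf = exampleField := hXf
  exact ⟨uniqueSingE0_exampleField, multE0_exampleField,
    interIdx_eq_of_span_eq_curvilinearIdeal span_locF_locG_exampleField (by simp [exampleBranch])⟩

end
end

section
/- Let X be the degree 3 vector field X = (y³ + y²z − yz² + z³) ∂/∂x + z³ ∂/∂y. Then [1:0:0] is the unique singular point of X, the multiplicity of X at [1:0:0] equals 3, and the Milnor number of X at [1:0:0] equals 13 (equivalently, for the local representation f = −y⁴ − y³z + y²z² − yz³ + z³ and g = −y³z − y²z² + yz³ − z⁴ one has I₀(f,g) = 13). -/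
open MvPolynomial Matrix

noncomputable section

/-! The local representation is `f = z³ - y·P`, `g = -z·P` with `P = y³ + y²z - yz² + z³`, so its
order is read off the homogeneous parts `z³` of `f` and `-z·P` of `g`. The ideal `J = (f, g)`
contains `z⁴` and `y⁷`, so every polynomial not vanishing at the origin is already a unit modulo
`J` and `O₀/(f, g) ≅ ℂ[y,z]/J`. This algebra has the basis `yᵃzᵇ` (`a ≤ 2`, `b ≤ 3`) together
with `y³`: these monomials span because `J` contains `z⁴`, `y³z + y²z² - yz³` and `f`, and they
are linearly independent because `y` and `z` act on `ℂ¹³` by two explicit commuting matrices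
that are killed by `f` and `g`, and under this action the 13 monomials send `e₀` to the standard
basis. -/

theorem MvPolynomial.mem_idealOfVars_of_constantCoeff_eq_zero {σ R : Type*} [CommSemiring R]
    {p : MvPolynomial σ R} (hp : constantCoeff p = 0) : p ∈ idealOfVars σ R := by
  rw [← pow_one (idealOfVars σ R), mem_pow_idealOfVars_iff']
  intro x hx
  rwa [(Finsupp.degree_eq_zero_iff x).mp (Nat.lt_one_iff.mp hx), ← constantCoeff_eq]

theorem MvPolynomial.isUnit_map_of_isUnit_constantCoeff {σ R A : Type*} [CommRing R]
    [CommRing A] (φ : MvPolynomial σ R →+* A) (hX : ∀ i, IsNilpotent (φ (X i)))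
    {p : MvPolynomial σ R} (hp : IsUnit (constantCoeff p)) : IsUnit (φ p) := by
  have hvars : idealOfVars σ R ≤ (nilradical A).comap φ :=
    Ideal.span_le.mpr (Set.range_subset_iff.mpr hX)
  have hnil : IsNilpotent (φ (p - C (constantCoeff p))) :=
    hvars (mem_idealOfVars_of_constantCoeff_eq_zero (by simp))
  simpa using hnil.isUnit_add_left_of_commute ((hp.map C).map φ) (Commute.all _ _)

open scoped IsMulCommutative in
def MvPolynomial.aevalOfCommute {σ R A : Type*} [CommRing R] [Ring A] [Algebra R A]
    (x : σ → A) (hx : ∀ i j, x i * x j = x j * x i) : MvPolynomial σ R →ₐ[R] A :=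
  haveI := Algebra.isMulCommutative_adjoin R (s := Set.range x)
    (by rintro _ ⟨i, rfl⟩ _ ⟨j, rfl⟩; exact hx i j)
  (Algebra.adjoin R (Set.range x)).val.comp
    (aeval fun i => ⟨x i, Algebra.subset_adjoin ⟨i, rfl⟩⟩)

@[simp]
theorem MvPolynomial.aevalOfCommute_X {σ R A : Type*} [CommRing R] [Ring A] [Algebra R A]
    (x : σ → A) (hx : ∀ i j, x i * x j = x j * x i) (i : σ) :
    aevalOfCommute (R := R) x hx (X i) = x i := by
  simp [aevalOfCommute]

theorem IsLocalization.finrank_quotient_map_eq {K R S : Type*} [Field K] [CommRing R]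
    [CommRing S] [Algebra K R] [Algebra R S] [Algebra K S] [IsScalarTower K R S]
    (M : Submonoid R) [IsLocalization M S] (I : Ideal R)
    (hM : ∀ m ∈ M, IsUnit (Ideal.Quotient.mk I m)) :
    Module.finrank K (S ⧸ I.map (algebraMap R S)) = Module.finrank K (R ⧸ I) :=
  -- `S ⧸ I·S` is the localization of `R ⧸ I` at the image of `M`, which consists of units.
  let e := atUnits (R ⧸ I) (Algebra.algebraMapSubmonoid (R ⧸ I) M)
    (S := S ⧸ I.map (algebraMap R S)) (by rintro _ ⟨m, hm, rfl⟩; exact hM m hm)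
  ((e.restrictScalars R).restrictScalars K).toLinearEquiv.finrank_eq.symm

theorem ordP_add_of_isHomogeneous {p q : MvPolynomial (Fin 2) ℂ} {n m : ℕ}
    (hp : p.IsHomogeneous n) (hp0 : p ≠ 0) (hq : q.IsHomogeneous m) (hnm : n < m) :
    ordP (p + q) = n := by
  have hcomp : ∀ k, homogeneousComponent k (p + q) =
      (if k = n then p else 0) + (if k = m then q else 0) := fun k => by
    rw [map_add, homogeneousComponent_of_mem ((mem_homogeneousSubmodule _ _).2 hp),
      homogeneousComponent_of_mem ((mem_homogeneousSubmodule _ _).2 hq)]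
  have hn : n ∈ {k | homogeneousComponent k (p + q) ≠ 0} := by
    simpa [hcomp, hnm.ne] using hp0
  refine le_antisymm (Nat.sInf_le hn) (le_csInf ⟨n, hn⟩ fun k hk => not_lt.mp fun hkn => hk ?_)
  simp [hcomp, hkn.ne, (hkn.trans hnm).ne]

theorem mem_S0_iff {s : MvPolynomial (Fin 2) ℂ} : s ∈ S0 ↔ IsUnit (constantCoeff s) := by
  rw [S0, Submonoid.mem_comap, mem_nonZeroDivisors_iff_ne_zero, isUnit_iff_ne_zero]
  simp [eval_zero']

namespace CubicFoliation

abbrev R2 := MvPolynomial (Fin 2) ℂ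

def vectorField : VF3 := ![X 1 ^ 3 + X 1 ^ 2 * X 2 - X 1 * X 2 ^ 2 + X 2 ^ 3, X 2 ^ 3, 0]

def cubicP : R2 := X 0 ^ 3 + X 0 ^ 2 * X 1 - X 0 * X 1 ^ 2 + X 1 ^ 3

def fLoc : R2 := X 1 ^ 3 - X 0 * cubicP

def gLoc : R2 := -(X 1 * cubicP)

theorem locF_vectorField : locF vectorField = fLoc := by
  simp [locF, deh, vectorField, fLoc, cubicP]

theorem locG_vectorField : locG vectorField = gLoc := by
  simp [locG, deh, vectorField, gLoc, cubicP]

theorem uniqueSingE0_vectorField : UniqueSingE0 vectorField := by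
  refine ⟨⟨0, funext fun i => by fin_cases i <;> simp [vfFun, vectorField]⟩, ?_⟩
  rintro p - ⟨lam, hsing⟩
  have h0 := congrFun hsing 0
  have h1 := congrFun hsing 1
  have h2 := congrFun hsing 2
  simp only [vfFun, vectorField, Pi.smul_apply, smul_eq_mul, cons_val_zero, cons_val_one,
    cons_val_two, head_cons, tail_cons, map_add, map_sub, map_pow, eval_X, map_zero] at h0 h1 h2
  obtain ⟨hy, hz⟩ : p 1 = 0 ∧ p 2 = 0 := by
    rcases eq_or_ne lam 0 with rfl | hlam
    · have hz : p 2 = 0 := pow_eq_zero_iff (n := 3) (by norm_num) |>.mp (by simpa using h1)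
      exact ⟨pow_eq_zero_iff (n := 3) (by norm_num) |>.mp (by simpa [hz] using h0), hz⟩
    · have hz : p 2 = 0 := (mul_eq_zero.mp h2.symm).resolve_left hlam
      exact ⟨(mul_eq_zero.mp (by simpa [hz] using h1.symm)).resolve_left hlam, hz⟩
  exact ⟨p 0, funext fun i => by fin_cases i <;> simp [hy, hz]⟩

theorem isHomogeneous_cubicP : cubicP.IsHomogeneous 3 := by
  have hX (i : Fin 2) : (X i : R2).IsHomogeneous 1 := isHomogeneous_X ℂ i
  exact ((((hX 0).pow 3).add (((hX 0).pow 2).mul (hX 1))).sub ((hX 0).mul ((hX 1).pow 2))).add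
    ((hX 1).pow 3)

theorem cubicP_ne_zero : cubicP ≠ 0 := fun h => by
  simpa [cubicP] using congrArg (eval ![1, 0]) h

theorem multE0_vectorField : multE0 vectorField = 3 := by
  have hz : (X 1 ^ 3 : R2).IsHomogeneous 3 := (isHomogeneous_X ℂ 1).pow 3
  have hyP : (X 0 * cubicP).IsHomogeneous 4 := (isHomogeneous_X ℂ 0).mul isHomogeneous_cubicP
  have hzP : (X 1 * cubicP).IsHomogeneous 4 := (isHomogeneous_X ℂ 1).mul isHomogeneous_cubicP
  have hf : ordP fLoc = 3 := by
    simpa [fLoc, sub_eq_add_neg] using ordP_add_of_isHomogeneous hz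
      (pow_ne_zero 3 (X_ne_zero 1)) hyP.neg (by norm_num)
  have hg : ordP gLoc = 4 := by
    simpa [gLoc] using ordP_add_of_isHomogeneous hzP.neg
      (neg_ne_zero.mpr (mul_ne_zero (X_ne_zero 1) cubicP_ne_zero)) (isHomogeneous_zero _ _ 5)
      (by norm_num)
  rw [multE0, locF_vectorField, locG_vectorField, hf, hg]
  rfl

def J : Ideal R2 := Ideal.span {fLoc, gLoc}

theorem fLoc_mem_J : fLoc ∈ J := Ideal.subset_span (Set.mem_insert _ _)

theorem gLoc_mem_J : gLoc ∈ J := Ideal.subset_span (Set.mem_insert_of_mem _ rfl)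

theorem X1_pow_four_mem_J : (X 1 : R2) ^ 4 ∈ J :=
  Ideal.mem_span_pair.mpr ⟨X 1, -X 0, by rw [fLoc, gLoc]; ring⟩

theorem X0_pow_seven_mem_J : (X 0 : R2) ^ 7 ∈ J :=
  Ideal.mem_span_pair.mpr
    ⟨-13 * (X 0 ^ 2 * X 1 ^ 2) + 11 * (X 0 * X 1 ^ 3) - 7 * X 1 ^ 4 - X 0 ^ 3 - X 0 ^ 2 * X 1
      + X 0 * X 1 ^ 2 - X 1 ^ 3,
     13 * (X 0 ^ 3 * X 1) - 11 * (X 0 ^ 2 * X 1 ^ 2) + 7 * (X 0 * X 1 ^ 3) + 2 * X 0 ^ 3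
      - 3 * (X 0 ^ 2 * X 1) + 5 * (X 0 * X 1 ^ 2) - 7 * X 1 ^ 3 - X 1 ^ 2,
     by rw [fLoc, gLoc, cubicP]; ring⟩

theorem isUnit_mk_of_mem_S0 {s : R2} (hs : s ∈ S0) : IsUnit (Ideal.Quotient.mk J s) := by
  refine isUnit_map_of_isUnit_constantCoeff _ (fun i => ?_) (mem_S0_iff.mp hs)
  fin_cases i
  · exact ⟨7, by rw [← map_pow, Ideal.Quotient.eq_zero_iff_mem]; exact X0_pow_seven_mem_J⟩
  · exact ⟨4, by rw [← map_pow, Ideal.Quotient.eq_zero_iff_mem]; exact X1_pow_four_mem_J⟩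

/-- Exponents `(a, b)` of the monomials `yᵃzᵇ` of the basis of `ℂ[y,z]/J`: index `a + 3b` for
`a ≤ 2`, `b ≤ 3`, and index `12` for `y³`. -/
def stdExp (j : Fin 13) : ℕ × ℕ := if j.val < 12 then (j.val % 3, j.val / 3) else (3, 0)

def stdMon (j : Fin 13) : R2 := X 0 ^ (stdExp j).1 * X 1 ^ (stdExp j).2

theorem pow_mul_pow_mem_span_stdExp {K A : Type*} [Ring K] [CommRing A] [Module K A]
    {y z : A} (hz4 : z ^ 4 = 0) (hy3z : y ^ 3 * z = -(y ^ 2 * z ^ 2) + y * z ^ 3)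
    (hy4 : y ^ 4 = z ^ 3 - y ^ 3 * z + y ^ 2 * z ^ 2 - y * z ^ 3) (a b : ℕ) :
    y ^ a * z ^ b ∈
      Submodule.span K (Set.range fun j => y ^ (stdExp j).1 * z ^ (stdExp j).2) := by
  set V := Submodule.span K (Set.range fun j => y ^ (stdExp j).1 * z ^ (stdExp j).2)
  have hstd (j : Fin 13) : y ^ (stdExp j).1 * z ^ (stdExp j).2 ∈ V :=
    Submodule.subset_span ⟨j, rfl⟩
  induction a using Nat.strong_induction_on generalizing b with
  | _ a ih =>
  obtain hb | hb := le_or_gt 4 b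
  · obtain ⟨b, rfl⟩ := Nat.exists_eq_add_of_le hb
    simp [pow_add, hz4]
  obtain ha | ha := le_or_gt a 2
  · have hexp : stdExp ⟨a + 3 * b, by omega⟩ = (a, b) := by
      rw [stdExp, if_pos (by simp only; omega)]
      ext <;> simp only <;> omega
    simpa [hexp] using hstd ⟨a + 3 * b, by omega⟩
  obtain ⟨a, rfl⟩ := Nat.exists_eq_add_of_le' ha
  rcases b with _ | b
  · rcases a with _ | a
    · exact hstd 12
    have h : y ^ (a + 1 + 3) * z ^ 0 = y ^ a * z ^ 3 - y ^ (a + 3) * z ^ 1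
        + y ^ (a + 2) * z ^ 2 - y ^ (a + 1) * z ^ 3 := by
      linear_combination y ^ a * hy4
    rw [h]
    exact V.sub_mem (V.add_mem (V.sub_mem (ih a (by omega) 3) (ih _ (by omega) 1))
      (ih _ (by omega) 2)) (ih _ (by omega) 3)
  · have h : y ^ (a + 3) * z ^ (b + 1)
        = -(y ^ (a + 2) * z ^ (b + 2)) + y ^ (a + 1) * z ^ (b + 3) := by
      linear_combination y ^ a * z ^ b * hy3z
    rw [h]
    exact V.add_mem (V.neg_mem (ih _ (by omega) _)) (ih _ (by omega) _)

theorem span_mk_stdMon_eq_top :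
    Submodule.span ℂ (Set.range fun j => Ideal.Quotient.mk J (stdMon j)) = ⊤ := by
  have hz4 : Ideal.Quotient.mk J (X 1) ^ 4 = 0 := by
    rw [← map_pow, Ideal.Quotient.eq_zero_iff_mem]; exact X1_pow_four_mem_J
  have hf : Ideal.Quotient.mk J fLoc = 0 := Ideal.Quotient.eq_zero_iff_mem.mpr fLoc_mem_J
  have hg : Ideal.Quotient.mk J gLoc = 0 := Ideal.Quotient.eq_zero_iff_mem.mpr gLoc_mem_J
  simp only [fLoc, gLoc, cubicP, map_sub, map_add, map_neg, map_mul, map_pow] at hf hg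
  set y := Ideal.Quotient.mk J (X 0)
  set z := Ideal.Quotient.mk J (X 1)
  have hmon (a b : ℕ) : Ideal.Quotient.mk J (X 0 ^ a * X 1 ^ b) ∈
      Submodule.span ℂ (Set.range fun j => Ideal.Quotient.mk J (stdMon j)) := by
    simpa only [stdMon, map_mul, map_pow] using pow_mul_pow_mem_span_stdExp (K := ℂ) hz4
      (y := y) (by linear_combination (y - 1) * hg - z * hf) (by linear_combination -hf) a b
  refine Submodule.eq_top_iff'.mpr fun q => ?_
  obtain ⟨p, rfl⟩ := Ideal.Quotient.mk_surjective q
  induction p using MvPolynomial.induction_on' with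
  | monomial u c =>
    rw [monomial_eq, Finsupp.prod_pow, Fin.prod_univ_two, C_mul',
      ← Ideal.Quotient.mkₐ_eq_mk ℂ, map_smul]
    exact Submodule.smul_mem _ _ (hmon _ _)
  | add p q hp hq => rw [map_add]; exact add_mem hp hq

/-- Multiplication by `y` on `ℂ[y,z]/J`, in the basis `stdMon`. -/
def matY : Matrix (Fin 13) (Fin 13) ℤ := !![0, 0, 0, 0, 0, 0, 0, 0, 0, 0, 0, 0, 0;
  1, 0, 0, 0, 0, 0, 0, 0, 0, 0, 0, 0, 0;
  0, 1, 0, 0, 0, 0, 0, 0, 0, 0, 0, 0, 0;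
  0, 0, 0, 0, 0, 0, 0, 0, 0, 0, 0, 0, 0;
  0, 0, 0, 1, 0, 0, 0, 0, 0, 0, 0, 0, 0;
  0, 0, 0, 0, 1, 0, 0, 0, 0, 0, 0, 0, 0;
  0, 0, 0, 0, 0, 0, 0, 0, 0, 0, 0, 0, 0;
  0, 0, 0, 0, 0, 0, 1, 0, 0, 0, 0, 0, 0;
  0, 0, 0, 0, 0, -1, 0, 1, 0, 0, 0, 0, 2;
  0, 0, 0, 0, 0, 0, 0, 0, 0, 0, 0, 0, 1;
  0, 0, 0, 0, 0, 1, 0, 0, 0, 1, 0, 0, -2;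
  0, 0, 0, 0, 0, 0, 0, 0, -1, 0, 1, 0, 0;
  0, 0, 1, 0, 0, 0, 0, 0, 0, 0, 0, 0, 0]

/-- Multiplication by `z` on `ℂ[y,z]/J`, in the basis `stdMon`. -/
def matZ : Matrix (Fin 13) (Fin 13) ℤ := !![0, 0, 0, 0, 0, 0, 0, 0, 0, 0, 0, 0, 0;
  0, 0, 0, 0, 0, 0, 0, 0, 0, 0, 0, 0, 0;
  0, 0, 0, 0, 0, 0, 0, 0, 0, 0, 0, 0, 0;
  1, 0, 0, 0, 0, 0, 0, 0, 0, 0, 0, 0, 0;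
  0, 1, 0, 0, 0, 0, 0, 0, 0, 0, 0, 0, 0;
  0, 0, 1, 0, 0, 0, 0, 0, 0, 0, 0, 0, 0;
  0, 0, 0, 1, 0, 0, 0, 0, 0, 0, 0, 0, 0;
  0, 0, 0, 0, 1, 0, 0, 0, 0, 0, 0, 0, 0;
  0, 0, 0, 0, 0, 1, 0, 0, 0, 0, 0, 0, -1;
  0, 0, 0, 0, 0, 0, 1, 0, 0, 0, 0, 0, 0;
  0, 0, 0, 0, 0, 0, 0, 1, 0, 0, 0, 0, 1;
  0, 0, 0, 0, 0, 0, 0, 0, 1, 0, 0, 0, 0;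
  0, 0, 0, 0, 0, 0, 0, 0, 0, 0, 0, 0, 0]

def matP : Matrix (Fin 13) (Fin 13) ℤ := matY ^ 3 + matY ^ 2 * matZ - matY * matZ ^ 2 + matZ ^ 3

theorem matY_mul_matZ : matY * matZ = matZ * matY := by decide

set_option maxHeartbeats 4000000 in
theorem matZ_pow_three : matZ ^ 3 = matY * matP := by decide

set_option maxHeartbeats 4000000 in
theorem matZ_mul_matP : matZ * matP = 0 := by decide

set_option maxHeartbeats 4000000 in
theorem matY_pow_mul_matZ_pow_stdExp_apply_zero (i j : Fin 13) :
    (matY ^ (stdExp j).1 * matZ ^ (stdExp j).2) i 0 = if i = j then 1 else 0 := by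
  revert i j; decide

def matCast : Matrix (Fin 13) (Fin 13) ℤ →+* Matrix (Fin 13) (Fin 13) ℂ :=
  (Int.castRingHom ℂ).mapMatrix

def rep : R2 →ₐ[ℂ] Matrix (Fin 13) (Fin 13) ℂ :=
  aevalOfCommute ![matCast matY, matCast matZ] fun i j => by
    have h : matCast matY * matCast matZ = matCast matZ * matCast matY := by
      rw [← map_mul, ← map_mul, matY_mul_matZ]
    fin_cases i <;> fin_cases j <;> first | rfl | exact h | exact h.symm

theorem rep_X0 : rep (X 0) = matCast matY := aevalOfCommute_X _ _ 0

theorem rep_X1 : rep (X 1) = matCast matZ := aevalOfCommute_X _ _ 1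

theorem rep_cubicP : rep cubicP = matCast matP := by
  simp only [cubicP, matP, map_add, map_sub, map_mul, map_pow, rep_X0, rep_X1]

theorem J_le_ker_rep : J ≤ RingHom.ker rep := by
  rw [J, Ideal.span_le, Set.insert_subset_iff, Set.singleton_subset_iff]
  simp only [SetLike.mem_coe, RingHom.mem_ker]
  constructor
  · rw [fLoc, map_sub, map_mul, map_pow, rep_X0, rep_X1, rep_cubicP, ← map_pow, matZ_pow_three,
      map_mul, sub_self]
  · rw [gLoc, map_neg, map_mul, rep_X1, rep_cubicP, ← map_mul, matZ_mul_matP, map_zero,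
      neg_zero]

def coord : (R2 ⧸ J) →ₗ[ℂ] (Fin 13 → ℂ) :=
  LinearMap.applyₗ (Pi.single 0 1) ∘ₗ Matrix.toLin'.toLinearMap ∘ₗ
    (Ideal.Quotient.liftₐ J rep fun _ h => J_le_ker_rep h).toLinearMap

theorem coord_mk (p : R2) : coord (Ideal.Quotient.mk J p) = (rep p).col 0 :=
  mulVec_single_one (rep p) 0

theorem coord_mk_stdMon (j : Fin 13) :
    coord (Ideal.Quotient.mk J (stdMon j)) = Pi.single j 1 := by
  ext i
  have h := congrArg (Int.cast : ℤ → ℂ) (matY_pow_mul_matZ_pow_stdExp_apply_zero i j)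
  have hrep : rep (stdMon j) = matCast (matY ^ (stdExp j).1 * matZ ^ (stdExp j).2) := by
    rw [stdMon, map_mul, map_pow, map_pow, rep_X0, rep_X1, map_mul, map_pow, map_pow]
  simpa [coord_mk, hrep, matCast, Pi.single_apply, apply_ite] using h

theorem linearIndependent_mk_stdMon :
    LinearIndependent ℂ fun j => Ideal.Quotient.mk J (stdMon j) := by
  refine LinearIndependent.of_comp coord ?_
  convert (Pi.basisFun ℂ (Fin 13)).linearIndependent using 1
  ext1 j
  simp [coord_mk_stdMon]

theorem finrank_quotient_J : Module.finrank ℂ (R2 ⧸ J) = 13 := by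
  rw [Module.finrank_eq_card_basis
    (Module.Basis.mk linearIndependent_mk_stdMon span_mk_stdMon_eq_top.ge), Fintype.card_fin]

theorem interIdx_vectorField : interIdx (locF vectorField) (locG vectorField) = 13 := by
  rw [interIdx, locF_vectorField, locG_vectorField, ← Set.image_pair, ← Ideal.map_span]
  exact (IsLocalization.finrank_quotient_map_eq S0 J fun _ => isUnit_mk_of_mem_S0).trans
    finrank_quotient_J

end CubicFoliation

/-- The foliation `X = (y³ + y²z - yz² + z³)∂x + z³∂y` has `[1:0:0]` as its unique
singular point, of multiplicity 3 and Milnor number 13. -/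
theorem stmt3 (Xf : VF3)
    (hXf : Xf = ![X 1 ^ 3 + X 1 ^ 2 * X 2 - X 1 * X 2 ^ 2 + X 2 ^ 3,
      X 2 ^ 3, 0]) :
    UniqueSingE0 Xf ∧ multE0 Xf = 3 ∧ interIdx (locF Xf) (locG Xf) = 13 := by
  subst hXf
  exact ⟨CubicFoliation.uniqueSingE0_vectorField, CubicFoliation.multE0_vectorField,
    CubicFoliation.interIdx_vectorField⟩

end
end

section
/- Each of the degree 2 vector fields X₁ = y² ∂/∂x + z² ∂/∂y, X₂ = −y² ∂/∂x + (yz − z²) ∂/∂y + z² ∂/∂z, and X₃ = (y² + z²) ∂/∂x + yz ∂/∂y has [1:0:0] as its unique singular point, has multiplicity 2 at [1:0:0], and is unstable. -/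
open MvPolynomial Matrix

noncomputable section

/-- Divergence-free representative of a degree 2 vector field: `X₀ = X - (1/4)(div X)·E`. -/
def nf2 (Xf : VF3) : VF3 := fun i => Xf i - (1 / 4 : ℂ) • (divg Xf * X i)

/-- Orbit of the divergence-free representative, as polynomial maps `ℂ³ → ℂ³`. -/
def orbitF2 (Xf : VF3) : Set ((Fin 3 → ℂ) → Fin 3 → ℂ) :=
  {F | ∃ g : SL3, F = vfFun (act3 g (nf2 Xf))}

/-- `Xf` is unstable: `0` lies in the closure of the orbit of `X₀`. -/
def Unstable2 (Xf : VF3) : Prop :=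
  (0 : (Fin 3 → ℂ) → Fin 3 → ℂ) ∈ closure (orbitF2 Xf)

def Semistable2 (Xf : VF3) : Prop := ¬ Unstable2 Xf

/-- `Xf` is stable: semistable, closed orbit, finite stabilizer. -/
def Stable2 (Xf : VF3) : Prop :=
  Semistable2 Xf ∧ IsClosed (orbitF2 Xf) ∧
    {g : SL3 | act3 g (nf2 Xf) = nf2 Xf}.Finite




set_option maxRecDepth 8000 in
/-! ### Auxiliary lemmas -/

section Aux

/-! #### Order computations -/

lemma ordP_eq_two (h : MvPolynomial (Fin 2) ℂ) (h2 : homogeneousComponent 2 h ≠ 0)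
    (h0 : homogeneousComponent 0 h = 0) (h1 : homogeneousComponent 1 h = 0) : ordP h = 2 := by
  have hmem : 2 ∈ {n | homogeneousComponent n h ≠ 0} := h2
  have hle : sInf {n | homogeneousComponent n h ≠ 0} ≤ 2 := Nat.sInf_le hmem
  have hmem' := Nat.sInf_mem ⟨2, hmem⟩
  set m := sInf {n | homogeneousComponent n h ≠ 0} with hm
  have e0 : m ≠ 0 := by intro e; rw [e] at hmem'; exact hmem' h0
  have e1 : m ≠ 1 := by intro e; rw [e] at hmem'; exact hmem' h1
  unfold ordP; omega

lemma ordP_eq_three (h : MvPolynomial (Fin 2) ℂ) (h3 : homogeneousComponent 3 h ≠ 0)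
    (h0 : homogeneousComponent 0 h = 0) (h1 : homogeneousComponent 1 h = 0)
    (h2 : homogeneousComponent 2 h = 0) : ordP h = 3 := by
  have hmem : 3 ∈ {n | homogeneousComponent n h ≠ 0} := h3
  have hle : sInf {n | homogeneousComponent n h ≠ 0} ≤ 3 := Nat.sInf_le hmem
  have hmem' := Nat.sInf_mem ⟨3, hmem⟩
  set m := sInf {n | homogeneousComponent n h ≠ 0} with hm
  have e0 : m ≠ 0 := by intro e; rw [e] at hmem'; exact hmem' h0
  have e1 : m ≠ 1 := by intro e; rw [e] at hmem'; exact hmem' h1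
  have e2 : m ≠ 2 := by intro e; rw [e] at hmem'; exact hmem' h2
  unfold ordP; omega

lemma hc_pow (i : Fin 2) (k n : ℕ) :
    homogeneousComponent n ((X i : MvPolynomial (Fin 2) ℂ) ^ k) = if n = k then X i ^ k else 0 :=
  homogeneousComponent_of_mem (by simpa using ((isHomogeneous_X ℂ i).pow k))

lemma hc_mul (i j : Fin 2) (n : ℕ) :
    homogeneousComponent n ((X i : MvPolynomial (Fin 2) ℂ) * X j) =
      if n = 2 then X i * X j else 0 :=
  homogeneousComponent_of_mem ((isHomogeneous_X ℂ i).mul (isHomogeneous_X ℂ j))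

lemma hc_mul_sq (i j : Fin 2) (n : ℕ) :
    homogeneousComponent n ((X i : MvPolynomial (Fin 2) ℂ) * X j ^ 2) =
      if n = 3 then X i * X j ^ 2 else 0 :=
  homogeneousComponent_of_mem (by
    simpa using ((isHomogeneous_X ℂ i).mul ((isHomogeneous_X ℂ j).pow 2)))

lemma coeff0_mul (i j : Fin 2) : coeff 0 ((X i : MvPolynomial (Fin 2) ℂ) * X j) = 0 := by
  rw [← constantCoeff_eq]; simp

lemma coeff0_mul_sq (i j : Fin 2) :
    coeff 0 ((X i : MvPolynomial (Fin 2) ℂ) * X j ^ 2) = 0 := by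
  rw [← constantCoeff_eq]; simp

/-! #### The one-parameter subgroup used to destabilize -/

def gdiag (s t : ℂ) (h : s * t = 1) : SL3 :=
  ⟨Matrix.diagonal ![t ^ 2, s, s], by
    simp [Matrix.det_diagonal, Fin.prod_univ_three]
    linear_combination (s * t + 1) * h⟩

lemma gdiag_coe (s t : ℂ) (h : s * t = 1) :
    ((gdiag s t h : SL3) : Matrix (Fin 3) (Fin 3) ℂ) = Matrix.diagonal ![t ^ 2, s, s] := rfl

lemma gdiag_inv (s t : ℂ) (h : s * t = 1) :
    (((gdiag s t h)⁻¹ : SL3) : Matrix (Fin 3) (Fin 3) ℂ) = Matrix.diagonal ![s ^ 2, t, t] := by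
  have h2 : (gdiag s t h) * ⟨Matrix.diagonal ![s ^ 2, t, t], by
      simp [Matrix.det_diagonal, Fin.prod_univ_three]
      linear_combination (s * t + 1) * h⟩ = 1 := by
    apply Subtype.ext
    show Matrix.diagonal _ * Matrix.diagonal _ = (1 : Matrix (Fin 3) (Fin 3) ℂ)
    ext i j
    fin_cases i <;> fin_cases j <;>
      simp [Matrix.mul_apply, Matrix.diagonal_apply, Matrix.one_apply, Fin.sum_univ_three] <;>
      first
        | linear_combination (s * t + 1) * h
        | linear_combination h
  rw [inv_eq_of_mul_eq_one_right h2]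

/-! #### The vector fields transformed by `gdiag` -/

set_option maxRecDepth 8000 in
lemma vf_act1 (s t : ℂ) (h : s * t = 1) (v : Fin 3 → ℂ) :
    vfFun (act3 (gdiag s t h) (nf2 ![X 1 ^ 2, X 2 ^ 2, 0])) v =
    ![t ^ 4 * (v 1) ^ 2, s * t ^ 2 * (v 2) ^ 2, 0] := by
  unfold vfFun act3
  rw [gdiag_inv, gdiag_coe]
  funext i
  fin_cases i <;>
    simp [nf2, divg, Matrix.diagonal_apply, Fin.sum_univ_three, pderiv_X, smul_eq_C_mul,
      map_ofNat] <;> ring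

set_option maxRecDepth 8000 in
lemma vf_act2 (s t : ℂ) (h : s * t = 1) (v : Fin 3 → ℂ) :
    vfFun (act3 (gdiag s t h) (nf2 ![-(X 1 ^ 2), X 1 * X 2 - X 2 ^ 2, X 2 ^ 2])) v =
    ![-(t ^ 4 * (v 1) ^ 2) - 3 / 4 * (t ^ 3 * s ^ 2) * (v 2 * v 0),
      1 / 4 * (s * t ^ 2) * (v 1 * v 2) - (s * t ^ 2) * (v 2) ^ 2,
      1 / 4 * (s * t ^ 2) * (v 2) ^ 2] := by
  unfold vfFun act3
  rw [gdiag_inv, gdiag_coe]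
  funext i
  fin_cases i <;>
    simp [nf2, divg, Matrix.diagonal_apply, Fin.sum_univ_three, pderiv_X, smul_eq_C_mul,
      map_ofNat] <;> ring

set_option maxRecDepth 8000 in
lemma vf_act3 (s t : ℂ) (h : s * t = 1) (v : Fin 3 → ℂ) :
    vfFun (act3 (gdiag s t h) (nf2 ![X 1 ^ 2 + X 2 ^ 2, X 1 * X 2, 0])) v =
    ![t ^ 4 * (v 1) ^ 2 + t ^ 4 * (v 2) ^ 2 - 1 / 4 * (t ^ 3 * s ^ 2) * (v 2 * v 0),
      3 / 4 * (s * t ^ 2) * (v 1 * v 2),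
      -(1 / 4 * (s * t ^ 2) * (v 2) ^ 2)] := by
  unfold vfFun act3
  rw [gdiag_inv, gdiag_coe]
  funext i
  fin_cases i <;>
    simp [nf2, divg, Matrix.diagonal_apply, Fin.sum_univ_three, pderiv_X, smul_eq_C_mul,
      map_ofNat] <;> ring

/-! #### The destabilizing sequence -/

def cseq (n : ℕ) : ℂ := ((n : ℂ) + 1)⁻¹

lemma cseq_spec (n : ℕ) : ((n : ℂ) + 1) * cseq n = 1 :=
  mul_inv_cancel₀ (Nat.cast_add_one_ne_zero n)

lemma cseq_tendsto : Filter.Tendsto cseq Filter.atTop (nhds 0) := by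
  rw [tendsto_zero_iff_norm_tendsto_zero]
  have : ∀ n : ℕ, ‖cseq n‖ = 1 / ((n : ℝ) + 1) := by
    intro n
    rw [cseq, norm_inv, show ((n : ℂ) + 1) = ((n + 1 : ℕ) : ℂ) by push_cast; ring,
      Complex.norm_natCast]
    push_cast; ring
  simp only [this]
  exact tendsto_one_div_add_atTop_nhds_zero_nat

lemma cseq_e2 (n : ℕ) : ((n : ℂ) + 1) * cseq n ^ 2 = cseq n := by
  rw [sq, ← mul_assoc, cseq_spec, one_mul]

lemma cseq_e3 (n : ℕ) : cseq n ^ 3 * ((n : ℂ) + 1) ^ 2 = cseq n := by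
  have h := cseq_spec n
  linear_combination (cseq n * (cseq n * ((n : ℂ) + 1) + 1)) * h

lemma unstable_of_formula (Xf : VF3)
    (G : ℂ → (Fin 3 → ℂ) → Fin 3 → ℂ)
    (hG : ∀ n : ℕ, vfFun (act3 (gdiag ((n : ℂ) + 1) (cseq n) (cseq_spec n)) (nf2 Xf))
        = G (cseq n))
    (hcont : ∀ v i, Continuous fun z : ℂ => G z v i)
    (hzero : ∀ v i, G 0 v i = 0) : Unstable2 Xf := by
  apply mem_closure_of_tendsto
    (f := fun n : ℕ => vfFun (act3 (gdiag ((n : ℂ) + 1) (cseq n) (cseq_spec n)) (nf2 Xf)))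
    (b := Filter.atTop)
  · rw [tendsto_pi_nhds]
    intro v
    rw [tendsto_pi_nhds]
    intro i
    have h1 : Filter.Tendsto (fun z : ℂ => G z v i) (nhds 0) (nhds 0) := by
      simpa [hzero] using (hcont v i).tendsto 0
    simp only [hG, Pi.zero_apply]
    exact h1.comp cseq_tendsto
  · filter_upwards with n
    exact ⟨gdiag ((n : ℂ) + 1) (cseq n) (cseq_spec n), rfl⟩

end Aux


/-- Each of the degree 2 foliations `X₁ = y²∂x + z²∂y`,
`X₂ = -y²∂x + (yz - z²)∂y + z²∂z`, `X₃ = (y² + z²)∂x + yz∂y` has `[1:0:0]` as its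
unique singular point, of multiplicity 2 there, and is unstable. -/
theorem stmt15 (X1 X2 X3 : VF3)
    (hX1 : X1 = ![X 1 ^ 2, X 2 ^ 2, 0])
    (hX2 : X2 = ![-(X 1 ^ 2), X 1 * X 2 - X 2 ^ 2, X 2 ^ 2])
    (hX3 : X3 = ![X 1 ^ 2 + X 2 ^ 2, X 1 * X 2, 0]) :
    (UniqueSingE0 X1 ∧ multE0 X1 = 2 ∧ Unstable2 X1) ∧
    (UniqueSingE0 X2 ∧ multE0 X2 = 2 ∧ Unstable2 X2) ∧
    (UniqueSingE0 X3 ∧ multE0 X3 = 2 ∧ Unstable2 X3) := by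
  subst hX1 hX2 hX3
  refine ⟨⟨?_, ?_, ?_⟩, ⟨?_, ?_, ?_⟩, ⟨?_, ?_, ?_⟩⟩
  -- X1 unique singular point
  · constructor
    · exact ⟨0, by funext i; fin_cases i <;> simp [vfFun]⟩
    · rintro p hp ⟨lam, h⟩
      have h0 := congrFun h 0
      have h1 := congrFun h 1
      have h2 := congrFun h 2
      simp [vfFun] at h0 h1 h2
      have hz2 : p 2 = 0 := by
        rcases h2 with rfl | h2
        · simpa using h1
        · exact h2
      have hz1 : p 1 = 0 := by
        rcases eq_or_ne lam 0 with rfl | hl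
        · simpa using h0
        · have hm : lam * p 1 = 0 := by rw [← h1, hz2]; ring
          rcases mul_eq_zero.mp hm with h' | h'
          · exact absurd h' hl
          · exact h'
      exact ⟨p 0, by funext i; fin_cases i <;> simp [hz1, hz2]⟩
  -- X1 multiplicity
  · have hF : locF ![X 1 ^ 2, X 2 ^ 2, 0] = X 1 ^ 2 - X 0 ^ 3 := by
      simp [locF, deh]; ring
    have hG : locG ![X 1 ^ 2, X 2 ^ 2, 0] = -(X 1 * X 0 ^ 2) := by
      simp [locG, deh]
    rw [multE0, hF, hG]
    have o1 : ordP ((X 1 : MvPolynomial (Fin 2) ℂ) ^ 2 - X 0 ^ 3) = 2 := by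
      apply ordP_eq_two <;> simp [hc_pow, coeff_X_pow, coeff0_mul, coeff0_mul_sq]
    have o2 : ordP (-((X 1 : MvPolynomial (Fin 2) ℂ) * X 0 ^ 2)) = 3 := by
      apply ordP_eq_three <;> simp [hc_mul_sq, coeff_X_pow, coeff0_mul, coeff0_mul_sq]
    rw [o1, o2]; omega
  -- X1 unstable
  · apply unstable_of_formula _ (fun z v => ![z ^ 4 * (v 1) ^ 2, z * (v 2) ^ 2, 0])
    · intro n
      funext v
      rw [vf_act1]
      funext i
      fin_cases i <;> simp [cseq_e2]
    · intro v i
      fin_cases i <;> simp <;> fun_prop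
    · intro v i
      fin_cases i <;> simp
  -- X2 unique singular point
  · constructor
    · exact ⟨0, by funext i; fin_cases i <;> simp [vfFun]⟩
    · rintro p hp ⟨lam, h⟩
      have h0 := congrFun h 0
      have h1 := congrFun h 1
      have h2 := congrFun h 2
      simp [vfFun] at h0 h1 h2
      have hz2 : p 2 = 0 := by
        by_contra hz
        -- from h2 : p 2 ^ 2 = lam * p 2, get p 2 = lam
        have hpl : p 2 = lam := by
          have hfac : (p 2 - lam) * p 2 = 0 := by linear_combination h2
          rcases mul_eq_zero.mp hfac with h' | h'
          · exact sub_eq_zero.mp h'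
          · exact absurd h' hz
        have hl0 : lam = 0 := by
          rw [hpl] at h1
          have hsq : lam ^ 2 = 0 := by linear_combination -h1
          exact pow_eq_zero_iff (n := 2) (by norm_num) |>.mp hsq
        exact hz (hpl.trans hl0)
      have hz1 : p 1 = 0 := by
        rcases eq_or_ne lam 0 with rfl | hl
        · have hsq : p 1 ^ 2 = 0 := by linear_combination -h0
          exact pow_eq_zero_iff (n := 2) (by norm_num) |>.mp hsq
        · have hm : lam * p 1 = 0 := by rw [← h1, hz2]; ring
          rcases mul_eq_zero.mp hm with h' | h'
          · exact absurd h' hl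
          · exact h'
      exact ⟨p 0, by funext i; fin_cases i <;> simp [hz1, hz2]⟩
  -- X2 multiplicity
  · have hF : locF ![-(X 1 ^ 2), X 1 * X 2 - X 2 ^ 2, X 2 ^ 2]
        = (X 0 * X 1 - X 1 ^ 2) + X 0 ^ 3 := by
      simp [locF, deh]; try ring
    have hG : locG ![-(X 1 ^ 2), X 1 * X 2 - X 2 ^ 2, X 2 ^ 2]
        = X 1 ^ 2 + X 1 * X 0 ^ 2 := by
      simp [locG, deh]; try ring
    rw [multE0, hF, hG]
    have o1 : ordP (((X 0 : MvPolynomial (Fin 2) ℂ) * X 1 - X 1 ^ 2) + X 0 ^ 3) = 2 := by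
      apply ordP_eq_two <;> simp [hc_pow, hc_mul, coeff_X_pow, coeff0_mul, coeff0_mul_sq]
      intro hc
      have := congrArg (eval ![(2 : ℂ), 1]) hc
      simp at this
      norm_num at this
    have o2 : ordP ((X 1 : MvPolynomial (Fin 2) ℂ) ^ 2 + X 1 * X 0 ^ 2) = 2 := by
      apply ordP_eq_two <;> simp [hc_pow, hc_mul_sq, coeff_X_pow, coeff0_mul, coeff0_mul_sq]
    rw [o1, o2]; omega
  -- X2 unstable
  · apply unstable_of_formula _ (fun z v =>
      ![-(z ^ 4 * (v 1) ^ 2) - 3 / 4 * z * (v 2 * v 0),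
        1 / 4 * z * (v 1 * v 2) - z * (v 2) ^ 2, 1 / 4 * z * (v 2) ^ 2])
    · intro n
      funext v
      rw [vf_act2]
      funext i
      fin_cases i <;> simp [cseq_e2, cseq_e3]
    · intro v i
      fin_cases i <;> simp <;> fun_prop
    · intro v i
      fin_cases i <;> simp
  -- X3 unique singular point
  · constructor
    · exact ⟨0, by funext i; fin_cases i <;> simp [vfFun]⟩
    · rintro p hp ⟨lam, h⟩
      have h0 := congrFun h 0
      have h1 := congrFun h 1
      have h2 := congrFun h 2
      simp [vfFun] at h0 h1 h2
      have key : p 1 = 0 ∧ p 2 = 0 := by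
        rcases h2 with rfl | hz2
        · -- lam = 0 : p1 p2 = 0, p1² + p2² = 0
          have hmul : p 1 * p 2 = 0 := by rw [h1]; ring
          have hsum : p 1 ^ 2 + p 2 ^ 2 = 0 := by rw [h0]; ring
          rcases mul_eq_zero.mp hmul with h' | h'
          · refine ⟨h', ?_⟩
            have : p 2 ^ 2 = 0 := by rw [← hsum, h']; ring
            exact pow_eq_zero_iff (n := 2) (by norm_num) |>.mp this
          · refine ⟨?_, h'⟩
            have : p 1 ^ 2 = 0 := by rw [← hsum, h']; ring
            exact pow_eq_zero_iff (n := 2) (by norm_num) |>.mp this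
        · rcases eq_or_ne lam 0 with rfl | hl
          · have hmul : p 1 * p 2 = 0 := by rw [h1]; ring
            have hsum : p 1 ^ 2 + p 2 ^ 2 = 0 := by rw [h0]; ring
            rcases mul_eq_zero.mp hmul with h' | h'
            · refine ⟨h', ?_⟩
              have : p 2 ^ 2 = 0 := by rw [← hsum, h']; ring
              exact pow_eq_zero_iff (n := 2) (by norm_num) |>.mp this
            · refine ⟨?_, h'⟩
              have : p 1 ^ 2 = 0 := by rw [← hsum, h']; ring
              exact pow_eq_zero_iff (n := 2) (by norm_num) |>.mp this
          · refine ⟨?_, hz2⟩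
            have hm : lam * p 1 = 0 := by rw [← h1, hz2]; ring
            rcases mul_eq_zero.mp hm with h' | h'
            · exact absurd h' hl
            · exact h'
      exact ⟨p 0, by funext i; fin_cases i <;> simp [key.1, key.2]⟩
  -- X3 multiplicity
  · have hF : locF ![X 1 ^ 2 + X 2 ^ 2, X 1 * X 2, 0]
        = X 0 * X 1 - (X 0 ^ 3 + X 0 * X 1 ^ 2) := by
      simp [locF, deh]; ring
    have hG : locG ![X 1 ^ 2 + X 2 ^ 2, X 1 * X 2, 0]
        = -(X 1 * X 0 ^ 2 + X 1 ^ 3) := by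
      simp [locG, deh]; ring
    rw [multE0, hF, hG]
    have o1 : ordP ((X 0 : MvPolynomial (Fin 2) ℂ) * X 1
        - ((X 0) ^ 3 + X 0 * X 1 ^ 2)) = 2 := by
      apply ordP_eq_two <;>
        simp [hc_pow, hc_mul, coeff_X_pow, coeff0_mul, coeff0_mul_sq,
          homogeneousComponent_of_mem
            (show (X 0 : MvPolynomial (Fin 2) ℂ) * X 1 ^ 2 ∈ homogeneousSubmodule (Fin 2) ℂ 3 from
              by simpa using ((isHomogeneous_X ℂ 0).mul ((isHomogeneous_X ℂ 1).pow 2)))]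
    have o2 : ordP (-((X 1 : MvPolynomial (Fin 2) ℂ) * X 0 ^ 2 + X 1 ^ 3)) = 3 := by
      apply ordP_eq_three <;> simp [hc_pow, hc_mul_sq, coeff_X_pow, coeff0_mul, coeff0_mul_sq]
      · intro hc
        have := congrArg (eval ![(0 : ℂ), 1]) hc
        simp at this
    rw [o1, o2]; omega
  -- X3 unstable
  · apply unstable_of_formula _ (fun z v =>
      ![z ^ 4 * (v 1) ^ 2 + z ^ 4 * (v 2) ^ 2 - 1 / 4 * z * (v 2 * v 0),
        3 / 4 * z * (v 1 * v 2), -(1 / 4 * z * (v 2) ^ 2)])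
    · intro n
      funext v
      rw [vf_act3]
      funext i
      fin_cases i <;> simp [cseq_e2, cseq_e3]
    · intro v i
      fin_cases i <;> simp <;> fun_prop
    · intro v i
      fin_cases i <;> simp

end
end
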